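/- Let a, b : Primes → ℝ be functions on the prime numbers with |a_p| ≤ 2 and |b_p| ≤ 2 for every prime p. Suppose that, as s → 1⁺, Σ_p (a_p² − 1) p^{−s} = O(1), Σ_p (b_p² − 1) p^{−s} = O(1), Σ_p (a_p⁴ − 3 a_p² + 1) p^{−s} = O(1), Σ_p (b_p⁴ − 3 b_p² + 1) p^{−s} = O(1), and Σ_p a_p² b_p² p^{−s} − Σ_p p^{−s} = O(1). Then liminf_{s→1⁺} (Σ_{p : a_p² < b_p²} p^{−s}) / (Σ_p p^{−s}) ≥ 1/16; that is, the set {p : a_p² < b_p²} has analytic density at least 1/16. -/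

import Mathlib

/-!
Put `d_p = b_p² - a_p² ∈ [-4, 4]`. Then `d² + 4d = d (d + 4)` is at most `32` when `d > 0` and at
most `0` otherwise, so `Σ_p (d_p² + 4 d_p) p^{-s} ≤ 32 Σ_{a_p² < b_p²} p^{-s}`. Expanding,
`d² + 4d = (a⁴ - 3a² + 1) + (b⁴ - 3b² + 1) - 2 (a²b² - 1) - (a² - 1) + 7 (b² - 1) + 2`, so by the
hypotheses the left-hand side is `2 Σ_p p^{-s} + O(1)`. Since `Σ_p p^{-s} → ∞` as `s → 1⁺`, the
ratio is eventually at least `1/16 - o(1)`.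
-/

open Filter Topology Asymptotics

lemma tendsto_tsum_atTop_of_not_summable {ι X : Type*} {l : Filter X} [l.NeBot]
    {f : X → ι → ℝ} {g : ι → ℝ} (hf0 : ∀ x i, 0 ≤ f x i) (hfs : ∀ᶠ x in l, Summable (f x))
    (hfg : ∀ i, Tendsto (f · i) l (𝓝 (g i))) (hg : ¬ Summable g) :
    Tendsto (fun x => ∑' i, f x i) l atTop := by
  refine tendsto_atTop.2 fun M => ?_
  obtain ⟨F, hF⟩ : ∃ F : Finset ι, M < ∑ i ∈ F, g i := by
    by_contra! h
    exact hg (summable_of_sum_le (fun i => ge_of_tendsto' (hfg i) (hf0 · i)) h)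
  have hFx : ∀ᶠ x in l, M < ∑ i ∈ F, f x i :=
    (tendsto_finsetSum F fun i _ => hfg i).eventually (lt_mem_nhds hF)
  filter_upwards [hFx, hfs] with x hx hsum
  exact hx.le.trans (hsum.sum_le_tsum F fun i _ => hf0 x i)

lemma summable_primes_rpow_neg {s : ℝ} (hs : 1 < s) :
    Summable fun p : Nat.Primes => ((p : ℕ) : ℝ) ^ (-s) :=
  Nat.Primes.summable_rpow.2 (neg_lt_neg hs)

lemma tendsto_tsum_primes_rpow_neg_atTop :
    Tendsto (fun s : ℝ => ∑' p : Nat.Primes, ((p : ℕ) : ℝ) ^ (-s)) (𝓝[>] 1) atTop := by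
  refine tendsto_tsum_atTop_of_not_summable (g := fun p : Nat.Primes => ((p : ℕ) : ℝ) ^ (-1 : ℝ))
    (fun s p => by positivity) ?_ (fun p => ?_) (by simp [Nat.Primes.summable_rpow])
  · filter_upwards [self_mem_nhdsWithin] with s hs
    exact summable_primes_rpow_neg hs
  · have hp : ((p : ℕ) : ℝ) ≠ 0 := by exact_mod_cast p.2.ne_zero
    exact ((Real.continuousAt_const_rpow hp).comp continuousAt_neg).tendsto.mono_left
      nhdsWithin_le_nhds

lemma summable_mul_of_abs_le {ι : Type*} {q w : ι → ℝ} {C : ℝ} (hq0 : ∀ i, 0 ≤ q i)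
    (hq : Summable q) (hw : ∀ i, |w i| ≤ C) : Summable fun i => w i * q i :=
  (hq.mul_left C).of_norm_bounded fun i => by
    rw [Real.norm_eq_abs, abs_mul, abs_of_nonneg (hq0 i)]
    exact mul_le_mul_of_nonneg_right (hw i) (hq0 i)

lemma sq_add_four_mul_le_ite {d : ℝ} (h₁ : -4 ≤ d) (h₂ : d ≤ 4) :
    d ^ 2 + 4 * d ≤ if 0 < d then 32 else 0 := by
  split_ifs <;> nlinarith

lemma two_mul_tsum_add_le_tsum_subtype {ι : Type*} {a b q : ι → ℝ} (ha : ∀ i, |a i| ≤ 2)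
    (hb : ∀ i, |b i| ≤ 2) (hq0 : ∀ i, 0 ≤ q i) (hq : Summable q) :
    2 * ∑' i, q i + (∑' i, (a i ^ 4 - 3 * a i ^ 2 + 1) * q i
      + ∑' i, (b i ^ 4 - 3 * b i ^ 2 + 1) * q i
      - 2 * ((∑' i, a i ^ 2 * b i ^ 2 * q i) - ∑' i, q i)
      - ∑' i, (a i ^ 2 - 1) * q i + 7 * ∑' i, (b i ^ 2 - 1) * q i)
      ≤ 32 * ∑' i : {i // a i ^ 2 < b i ^ 2}, q i := by
  have ha_sq : ∀ i, 0 ≤ a i ^ 2 ∧ a i ^ 2 ≤ 4 := fun i =>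
    ⟨sq_nonneg _, by nlinarith [abs_nonneg (a i), sq_abs (a i), ha i]⟩
  have hb_sq : ∀ i, 0 ≤ b i ^ 2 ∧ b i ^ 2 ≤ 4 := fun i =>
    ⟨sq_nonneg _, by nlinarith [abs_nonneg (b i), sq_abs (b i), hb i]⟩
  have h1 := (summable_mul_of_abs_le hq0 hq (w := fun i => a i ^ 2 - 1) (C := 3) fun i =>
    abs_le.2 ⟨by linarith [ha_sq i], by linarith [ha_sq i]⟩).hasSum
  have h2 := (summable_mul_of_abs_le hq0 hq (w := fun i => b i ^ 2 - 1) (C := 3) fun i =>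
    abs_le.2 ⟨by linarith [hb_sq i], by linarith [hb_sq i]⟩).hasSum
  have h3 := (summable_mul_of_abs_le hq0 hq (w := fun i => a i ^ 4 - 3 * a i ^ 2 + 1) (C := 5)
    fun i => abs_le.2 ⟨by nlinarith [ha_sq i], by nlinarith [ha_sq i]⟩).hasSum
  have h4 := (summable_mul_of_abs_le hq0 hq (w := fun i => b i ^ 4 - 3 * b i ^ 2 + 1) (C := 5)
    fun i => abs_le.2 ⟨by nlinarith [hb_sq i], by nlinarith [hb_sq i]⟩).hasSum
  have h5 := (summable_mul_of_abs_le hq0 hq (w := fun i => a i ^ 2 * b i ^ 2) (C := 16)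
    fun i => abs_le.2 ⟨by nlinarith [ha_sq i, hb_sq i], by nlinarith [ha_sq i, hb_sq i]⟩).hasSum
  have hL := (hq.hasSum.mul_left 2).add
    ((((h3.add h4).sub ((h5.sub hq.hasSum).mul_left 2)).sub h1).add (h2.mul_left 7))
  have hR := (hasSum_subtype_iff_indicator.mp
    (hq.subtype {i | a i ^ 2 < b i ^ 2}).hasSum).mul_left 32
  refine hasSum_le (fun i => ?_) hL hR
  have hd := sq_add_four_mul_le_ite (d := b i ^ 2 - a i ^ 2) (by linarith [ha_sq i, hb_sq i])
    (by linarith [ha_sq i, hb_sq i])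
  calc _ = ((b i ^ 2 - a i ^ 2) ^ 2 + 4 * (b i ^ 2 - a i ^ 2)) * q i := by ring
    _ ≤ (if 0 < b i ^ 2 - a i ^ 2 then 32 else 0) * q i := mul_le_mul_of_nonneg_right hd (hq0 i)
    _ = 32 * {i | a i ^ 2 < b i ^ 2}.indicator q i := by
      by_cases h : a i ^ 2 < b i ^ 2 <;> simp [h, sub_pos]

lemma Filter.le_liminf_div_of_tendsto_atTop {α : Type*} {l : Filter α} [l.NeBot] {A S : α → ℝ}
    {c K : ℝ} (hS : Tendsto S l atTop) (hAS : ∀ᶠ x in l, A x ≤ S x)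
    (hA : ∀ᶠ x in l, c * S x - K ≤ A x) : c ≤ liminf (fun x => A x / S x) l := by
  have hlim : Tendsto (fun x => c - K / S x) l (𝓝 c) := by
    simpa using tendsto_const_nhds.sub (tendsto_const_nhds.div_atTop hS)
  have hSpos := hS.eventually_gt_atTop 0
  have hlow : ∀ᶠ x in l, c - K / S x ≤ A x / S x := by
    filter_upwards [hA, hSpos] with x hx hSx
    rw [le_div_iff₀ hSx, sub_mul, div_mul_cancel₀ _ hSx.ne']
    exact hx
  have hup : ∀ᶠ x in l, A x / S x ≤ 1 := by
    filter_upwards [hAS, hSpos] with x hx hSx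
    exact div_le_one_of_le₀ hx hSx.le
  calc c = liminf (fun x => c - K / S x) l := hlim.liminf_eq.symm
    _ ≤ liminf (fun x => A x / S x) l :=
      liminf_le_liminf hlow hlim.isBoundedUnder_ge (isCoboundedUnder_ge_of_eventually_le l hup)

/-- Theorem 2 of the paper, axiomatized form: If `|a p| ≤ 2`, `|b p| ≤ 2`
for all primes `p`, and as `s → 1⁺` the sums `Σ_p (a_p² - 1) p^{-s}`,
`Σ_p (b_p² - 1) p^{-s}`, `Σ_p (a_p⁴ - 3 a_p² + 1) p^{-s}`, `Σ_p (b_p⁴ - 3 b_p² + 1) p^{-s}`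
and `Σ_p a_p² b_p² p^{-s} - Σ_p p^{-s}` are all `O(1)`, then the set `{p : a_p² < b_p²}`
has analytic density at least `1/16`. -/
theorem statement7 (a b : Nat.Primes → ℝ)
    (ha : ∀ p : Nat.Primes, |a p| ≤ 2) (hb : ∀ p : Nat.Primes, |b p| ≤ 2)
    (h1 : (fun s : ℝ => ∑' p : Nat.Primes, (a p ^ 2 - 1) * ((p : ℕ) : ℝ) ^ (-s))
      =O[𝓝[>] (1 : ℝ)] (fun _ => (1 : ℝ)))
    (h2 : (fun s : ℝ => ∑' p : Nat.Primes, (b p ^ 2 - 1) * ((p : ℕ) : ℝ) ^ (-s))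
      =O[𝓝[>] (1 : ℝ)] (fun _ => (1 : ℝ)))
    (h3 : (fun s : ℝ =>
        ∑' p : Nat.Primes, (a p ^ 4 - 3 * a p ^ 2 + 1) * ((p : ℕ) : ℝ) ^ (-s))
      =O[𝓝[>] (1 : ℝ)] (fun _ => (1 : ℝ)))
    (h4 : (fun s : ℝ =>
        ∑' p : Nat.Primes, (b p ^ 4 - 3 * b p ^ 2 + 1) * ((p : ℕ) : ℝ) ^ (-s))
      =O[𝓝[>] (1 : ℝ)] (fun _ => (1 : ℝ)))
    (h5 : (fun s : ℝ => (∑' p : Nat.Primes, a p ^ 2 * b p ^ 2 * ((p : ℕ) : ℝ) ^ (-s))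
        - ∑' p : Nat.Primes, ((p : ℕ) : ℝ) ^ (-s))
      =O[𝓝[>] (1 : ℝ)] (fun _ => (1 : ℝ))) :
    (1 : ℝ) / 16 ≤ liminf (fun s : ℝ =>
      (∑' p : {p : Nat.Primes // a p ^ 2 < b p ^ 2}, ((p.1 : ℕ) : ℝ) ^ (-s)) /
        ∑' p : Nat.Primes, ((p : ℕ) : ℝ) ^ (-s)) (𝓝[>] (1 : ℝ)) := by
  obtain ⟨K, hK⟩ :=
    ((((h3.add h4).sub (h5.const_mul_left 2)).sub h1).add (h2.const_mul_left 7)).bound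
  refine le_liminf_div_of_tendsto_atTop (K := K / 32) tendsto_tsum_primes_rpow_neg_atTop ?_ ?_
  · filter_upwards [self_mem_nhdsWithin] with s hs
    exact (summable_primes_rpow_neg hs).tsum_subtype_le _ _ fun p => by positivity
  · filter_upwards [hK, self_mem_nhdsWithin] with s hKs hs
    have hkey := two_mul_tsum_add_le_tsum_subtype ha hb (fun p => by positivity)
      (summable_primes_rpow_neg hs)
    rw [norm_one, mul_one, Real.norm_eq_abs] at hKs
    linarith [(abs_le.1 hKs).1]
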